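/- Continuity of information cost in the error parameter via input exchange: if there is a protocol computing f with error δ, internal information cost I, and the inputs have bit-length ℓ, then for every ε ∈ (0,1) there is a protocol with error at most (1−ε)δ and internal information cost at most (1−ε)·I + ε·ℓ′ for some ℓ′ ≤ 2ℓ (the cost of the trivial exchange protocol). -/

import Mathlib

/-!
Mix the given protocol, by a public coin of bias `ε`, with the protocol in which both players
announce their inputs. On the sample space `Ω × Bool` the new transcript lives in
`𝒯 ⊕ (inputs × inputs)`, and the two branches have disjoint transcript values, so every joint
entropy involving the transcript splits as `(1 - ε) H(·) + ε H(·) + h(ε)`. In each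
conditional mutual information the binary-entropy terms and the exchange-branch terms cancel,
leaving `(1 - ε) I(X; T | Y) + ε H(X | Y)`, and `H(X | Y) ≤ ℓ` by Jensen's inequality for
`x ↦ -x log x`. The exchange branch never errs, so the error becomes `(1 - ε)` times the old one.
-/

open scoped Classical
open Finset

/-- Shannon entropy (base 2) of a pmf on a finite type. -/
noncomputable def entH {α : Type*} [Fintype α] (p : α → ℝ) : ℝ :=
  -∑ x, p x * Real.logb 2 (p x)

/-- Kullback-Leibler divergence (base 2) between pmfs on a finite type. -/
noncomputable def klD {α : Type*} [Fintype α] (p q : α → ℝ) : ℝ :=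
  ∑ x, p x * Real.logb 2 (p x / q x)

/-- Distribution of a random variable `f` on a finite sample space with pmf `μ`. -/
noncomputable def distOf {Ω α : Type*} [Fintype Ω] [Fintype α] (μ : Ω → ℝ) (f : Ω → α) : α → ℝ :=
  fun x => ∑ ω, if f ω = x then μ ω else 0

/-- Entropy of a random variable. -/
noncomputable def rvH {Ω α : Type*} [Fintype Ω] [Fintype α] (μ : Ω → ℝ) (f : Ω → α) : ℝ :=
  entH (distOf μ f)

/-- Conditional entropy H(f | g). -/
noncomputable def condEnt {Ω α β : Type*} [Fintype Ω] [Fintype α] [Fintype β]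
    (μ : Ω → ℝ) (f : Ω → α) (g : Ω → β) : ℝ :=
  rvH μ (fun ω => (f ω, g ω)) - rvH μ g

/-- Conditional mutual information I(A ; B | C). -/
noncomputable def cMI {Ω α β γ : Type*} [Fintype Ω] [Fintype α] [Fintype β] [Fintype γ]
    (μ : Ω → ℝ) (A : Ω → α) (B : Ω → β) (C : Ω → γ) : ℝ :=
  condEnt μ A C - condEnt μ A (fun ω => (B ω, C ω))

open Real

section Entropy

variable {Ω Ω' α β γ 𝒯 : Type*} [Fintype Ω] [Fintype Ω'] [Fintype α] [Fintype β] [Fintype γ]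
  [Fintype 𝒯]

lemma entH_eq_sum_negMulLog (p : α → ℝ) : entH p = (∑ x, negMulLog (p x)) / log 2 := by
  simp only [entH, logb, negMulLog, Finset.sum_div]
  rw [← Finset.sum_neg_distrib]
  exact Finset.sum_congr rfl fun x _ => by ring

lemma distOf_nonneg {μ : Ω → ℝ} (hμ : ∀ ω, 0 ≤ μ ω) (f : Ω → α) (x : α) :
    0 ≤ distOf μ f x :=
  Finset.sum_nonneg fun ω _ => by split_ifs <;> simp [hμ ω]

lemma sum_distOf (μ : Ω → ℝ) (f : Ω → α) : ∑ x, distOf μ f x = ∑ ω, μ ω := by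
  unfold distOf
  rw [Finset.sum_comm]
  simp

lemma distOf_eq_sum_distOf_prod (μ : Ω → ℝ) (f : Ω → α) (g : Ω → β) (y : β) :
    distOf μ g y = ∑ x, distOf μ (fun ω => (f ω, g ω)) (x, y) := by
  unfold distOf
  rw [Finset.sum_comm]
  refine Finset.sum_congr rfl fun ω _ => ?_
  simp [Prod.mk.injEq, ite_and]

lemma distOf_comp_equiv (e : Ω' ≃ Ω) (μ : Ω → ℝ) (G : Ω → α) :
    distOf (fun i => μ (e i)) (fun i => G (e i)) = distOf μ G :=
  funext fun x => e.sum_comp fun ω => if G ω = x then μ ω else 0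

lemma rvH_comp_equiv (e : Ω' ≃ Ω) (μ : Ω → ℝ) (G : Ω → α) :
    rvH (fun i => μ (e i)) (fun i => G (e i)) = rvH μ G := by
  rw [rvH, distOf_comp_equiv]; rfl

lemma rvH_comp_injective {j : α → β} (hj : Function.Injective j) (μ : Ω → ℝ) (G : Ω → α) :
    rvH μ (fun ω => j (G ω)) = rvH μ G := by
  have hmem : ∀ a, distOf μ (fun ω => j (G ω)) (j a) = distOf μ G a := fun a =>
    Finset.sum_congr rfl fun ω _ => by rw [hj.eq_iff]
  have hout : ∀ b ∉ Set.range j, distOf μ (fun ω => j (G ω)) b = 0 := fun b hb =>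
    Finset.sum_eq_zero fun ω _ => if_neg fun h => hb ⟨G ω, h⟩
  simp only [rvH, entH]
  congr 1
  refine (Fintype.sum_of_injective j hj _ _ (fun b hb => ?_) fun a => ?_).symm
  · simp [hout b hb]
  · rw [hmem]

lemma cMI_comp_equiv (e : Ω' ≃ Ω) (μ : Ω → ℝ) (A : Ω → α) (B : Ω → β) (C : Ω → γ) :
    cMI (fun i => μ (e i)) (fun i => A (e i)) (fun i => B (e i)) (fun i => C (e i))
      = cMI μ A B C := by
  simp only [cMI, condEnt]
  rw [rvH_comp_equiv e μ (fun ω => (A ω, C ω)), rvH_comp_equiv e μ C,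
    rvH_comp_equiv e μ (fun ω => (A ω, B ω, C ω)), rvH_comp_equiv e μ (fun ω => (B ω, C ω))]

lemma cMI_comp_injective_mid {j : β → 𝒯} (hj : Function.Injective j) (μ : Ω → ℝ)
    (A : Ω → α) (B : Ω → β) (C : Ω → γ) :
    cMI μ A (fun ω => j (B ω)) C = cMI μ A B C := by
  have hABC : rvH μ (fun ω => (A ω, j (B ω), C ω)) = rvH μ (fun ω => (A ω, B ω, C ω)) :=
    rvH_comp_injective (j := Prod.map id (Prod.map j id))
      (Function.injective_id.prodMap (hj.prodMap Function.injective_id)) μ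
      (fun ω => (A ω, B ω, C ω))
  have hBC : rvH μ (fun ω => (j (B ω), C ω)) = rvH μ (fun ω => (B ω, C ω)) :=
    rvH_comp_injective (j := Prod.map j id) (hj.prodMap Function.injective_id) μ
      (fun ω => (B ω, C ω))
  simp only [cMI, condEnt, hABC, hBC]

lemma sum_negMulLog_le [Nonempty α] {q : α → ℝ} (hq : ∀ x, 0 ≤ q x) :
    ∑ x, negMulLog (q x) ≤ negMulLog (∑ x, q x) + (∑ x, q x) * log (Fintype.card α) := by
  set N : ℝ := (Fintype.card α : ℝ)
  have hN : 0 < N := by positivity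
  have jensen := concaveOn_negMulLog.le_map_sum (t := Finset.univ) (w := fun _ => N⁻¹) (p := q)
    (fun _ _ => by positivity) (by simp [N, hN.ne']) (fun x _ => hq x)
  simp only [smul_eq_mul, ← Finset.mul_sum] at jensen
  rw [mul_comm, negMulLog_mul, negMulLog, log_inv] at jensen
  have := mul_le_mul_of_nonneg_left jensen hN.le
  field_simp at this
  linarith

lemma condEnt_le_logb_card [Nonempty α] {μ : Ω → ℝ} (hμ : ∀ ω, 0 ≤ μ ω) (hs : ∑ ω, μ ω = 1)
    (X : Ω → α) (Y : Ω → β) :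
    condEnt μ X Y ≤ logb 2 (Fintype.card α) := by
  set p := distOf μ (fun ω => (X ω, Y ω))
  have hfiber : ∀ y, ∑ x, negMulLog (p (x, y))
      ≤ negMulLog (distOf μ Y y) + distOf μ Y y * log (Fintype.card α) := fun y => by
    rw [distOf_eq_sum_distOf_prod μ X Y y]
    exact sum_negMulLog_le fun x => distOf_nonneg hμ _ _
  have hsum := Finset.sum_le_sum fun y (_ : y ∈ Finset.univ) => hfiber y
  rw [Finset.sum_add_distrib, ← Finset.sum_mul, sum_distOf, hs, one_mul,
    ← Fintype.sum_prod_type_right (fun z => negMulLog (p z))] at hsum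
  rw [condEnt, rvH, rvH, entH_eq_sum_negMulLog, entH_eq_sum_negMulLog, ← sub_div, logb]
  gcongr
  linarith

end Entropy

section CoinMix

variable {Ω α β : Type*}

def coin (ε : ℝ) : Bool → ℝ := fun b => if b then ε else 1 - ε

def coinMix (μ : Ω → ℝ) (ε : ℝ) : Ω × Bool → ℝ := fun z => μ z.1 * coin ε z.2

def coinSelect (g : Ω → α) (h : Ω → β) : Ω × Bool → α ⊕ β :=
  fun z => if z.2 then .inr (h z.1) else .inl (g z.1)

lemma coinMix_nonneg {μ : Ω → ℝ} (hμ : ∀ ω, 0 ≤ μ ω) {ε : ℝ} (hε0 : 0 ≤ ε) (hε1 : ε ≤ 1)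
    (z : Ω × Bool) : 0 ≤ coinMix μ ε z :=
  mul_nonneg (hμ z.1) (by cases z.2 <;> simp [coin, hε0, hε1])

variable [Fintype Ω] [Fintype α] [Fintype β]

lemma sum_coinMix_bool (μ : Ω → ℝ) (ε : ℝ) (F : Ω × Bool → ℝ → ℝ) :
    ∑ z, F z (coinMix μ ε z) = ∑ ω, (F (ω, false) ((1 - ε) * μ ω) + F (ω, true) (ε * μ ω)) := by
  rw [Fintype.sum_prod_type]
  refine Finset.sum_congr rfl fun ω _ => ?_
  simp [coinMix, coin, mul_comm, add_comm]

lemma sum_coinMix (μ : Ω → ℝ) (ε : ℝ) : ∑ z, coinMix μ ε z = ∑ ω, μ ω := by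
  rw [sum_coinMix_bool μ ε fun _ r => r]
  exact Finset.sum_congr rfl fun ω _ => by ring

lemma distOf_coinMix_comp_fst (μ : Ω → ℝ) (ε : ℝ) (G : Ω → α) :
    distOf (coinMix μ ε) (fun z => G z.1) = distOf μ G := by
  funext x
  rw [distOf, sum_coinMix_bool μ ε fun z r => if G z.1 = x then r else 0]
  refine Finset.sum_congr rfl fun ω _ => ?_
  split_ifs <;> ring

lemma rvH_coinMix_comp_fst (μ : Ω → ℝ) (ε : ℝ) (G : Ω → α) :
    rvH (coinMix μ ε) (fun z => G z.1) = rvH μ G := by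
  rw [rvH, distOf_coinMix_comp_fst]; rfl

lemma distOf_coinMix_coinSelect (μ : Ω → ℝ) (ε : ℝ) (g : Ω → α) (h : Ω → β) :
    distOf (coinMix μ ε) (coinSelect g h)
      = Sum.elim (fun a => (1 - ε) * distOf μ g a) (fun b => ε * distOf μ h b) := by
  funext c
  rw [distOf, Fintype.sum_prod_type]
  cases c <;> simp [coinSelect, coinMix, coin, distOf, Finset.mul_sum, mul_comm]

lemma rvH_coinMix_coinSelect {μ : Ω → ℝ} (hs : ∑ ω, μ ω = 1) (ε : ℝ) (g : Ω → α) (h : Ω → β) :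
    rvH (coinMix μ ε) (coinSelect g h) = (1 - ε) * rvH μ g + ε * rvH μ h + entH (coin ε) := by
  simp only [rvH, entH_eq_sum_negMulLog, distOf_coinMix_coinSelect, Fintype.sum_sum_type,
    Sum.elim_inl, Sum.elim_inr, negMulLog_mul, Finset.sum_add_distrib, ← Finset.mul_sum,
    ← Finset.sum_mul, sum_distOf, hs, Fintype.sum_bool, coin, if_true, Bool.false_eq_true, if_false]
  field_simp
  ring

end CoinMix

section Exchange

variable {Ω α β γ κ 𝒯 : Type*} [Fintype Ω]

lemma sum_coinMix_exchange_error (μ : Ω → ℝ) (ε : ℝ) (f : α → β → Bool) (out : 𝒯 → Bool)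
    (X : Ω → α) (Y : Ω → β) (T : Ω → 𝒯) :
    (∑ z, if Sum.elim out (fun p => f p.1 p.2) (coinSelect T (fun ω => (X ω, Y ω)) z)
        ≠ f (X z.1) (Y z.1) then coinMix μ ε z else 0)
      = (1 - ε) * ∑ ω, if out (T ω) ≠ f (X ω) (Y ω) then μ ω else 0 := by
  rw [Fintype.sum_prod_type, Finset.mul_sum]
  refine Finset.sum_congr rfl fun ω _ => ?_
  simp only [Fintype.sum_bool, coinSelect, coinMix, coin, if_true, Bool.false_eq_true, if_false,
    Sum.elim_inr, Sum.elim_inl, ne_eq, not_true_eq_false]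
  split_ifs <;> ring

variable [Fintype α] [Fintype γ] [Fintype κ] [Fintype 𝒯]

lemma cMI_coinMix_coinSelect {μ : Ω → ℝ} (hs : ∑ ω, μ ω = 1) (ε : ℝ) (A : Ω → α) (T : Ω → 𝒯)
    (C : Ω → γ) (P : Ω → κ) (a : κ → α) (c : κ → γ) (hA : ∀ ω, A ω = a (P ω))
    (hC : ∀ ω, C ω = c (P ω)) :
    cMI (coinMix μ ε) (fun z => A z.1) (coinSelect T P) (fun z => C z.1)
      = (1 - ε) * cMI μ A T C + ε * condEnt μ A C := by
  -- On the exchange branch `P` determines `A` and `C`, so the `ε * H(P)` terms cancel.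
  have hATC : rvH (coinMix μ ε) (fun z => (A z.1, coinSelect T P z, C z.1))
      = (1 - ε) * rvH μ (fun ω => (A ω, T ω, C ω)) + ε * rvH μ P + entH (coin ε) := by
    have hφ : Function.Injective (Sum.elim (fun v : α × 𝒯 × γ => (v.1, Sum.inl v.2.1, v.2.2))
        (fun p : κ => (a p, Sum.inr p, c p))) := by
      refine Function.Injective.sumElim ?_ ?_ fun v p h => by simp at h
      · rintro ⟨x, t, y⟩ ⟨x', t', y'⟩ h
        simp_all
      · intro p p' h
        simpa using congrArg (fun v => v.2.1) h
    rw [← rvH_coinMix_coinSelect hs, ← rvH_comp_injective hφ]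
    congr 1
    funext ⟨ω, b⟩
    cases b <;> simp [coinSelect, hA, hC]
  have hTC : rvH (coinMix μ ε) (fun z => (coinSelect T P z, C z.1))
      = (1 - ε) * rvH μ (fun ω => (T ω, C ω)) + ε * rvH μ P + entH (coin ε) := by
    have hψ : Function.Injective (Sum.elim (fun v : 𝒯 × γ => (Sum.inl v.1, v.2))
        (fun p : κ => (Sum.inr p, c p))) := by
      refine Function.Injective.sumElim ?_ ?_ fun v p h => by simp at h
      · rintro ⟨t, y⟩ ⟨t', y'⟩ h
        simp_all
      · intro p p' h
        simpa using congrArg (fun v => v.1) h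
    rw [← rvH_coinMix_coinSelect hs, ← rvH_comp_injective hψ]
    congr 1
    funext ⟨ω, b⟩
    cases b <;> simp [coinSelect, hC]
  have hAC : rvH (coinMix μ ε) (fun z => (A z.1, C z.1)) = rvH μ (fun ω => (A ω, C ω)) :=
    rvH_coinMix_comp_fst μ ε fun ω => (A ω, C ω)
  have hC' : rvH (coinMix μ ε) (fun z => C z.1) = rvH μ C := rvH_coinMix_comp_fst μ ε C
  simp only [cMI, condEnt, hATC, hTC, hAC, hC']
  ring

end Exchange

lemma logb_card_bitvec (ℓ : ℕ) : logb 2 (Fintype.card (Fin ℓ → Bool)) = ℓ := by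
  simp [Real.logb_pow]

/-- Continuity of information cost in the error parameter: from a protocol with error δ
and internal information cost I on inputs of bit-length ℓ, one gets for every ε a protocol
with error at most (1−ε)δ and information cost at most (1−ε)I + ε·ℓ' with ℓ' ≤ 2ℓ. -/
theorem info_cost_continuity {Ω 𝒯 : Type*} [Fintype Ω] [Fintype 𝒯]
    {ℓ : ℕ} (f : (Fin ℓ → Bool) → (Fin ℓ → Bool) → Bool)
    (μ : Ω → ℝ) (hμ : ∀ ω, 0 ≤ μ ω) (hs : ∑ ω, μ ω = 1)
    (X Y : Ω → (Fin ℓ → Bool)) (T : Ω → 𝒯) (out : 𝒯 → Bool)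
    (δ I : ℝ)
    (herr : (∑ ω, if out (T ω) ≠ f (X ω) (Y ω) then μ ω else 0) ≤ δ)
    (hI : cMI μ X T Y + cMI μ Y T X = I)
    (ε : ℝ) (hε : 0 < ε) (hε1 : ε < 1) :
    ∃ (Ω' : Type) (_ : Fintype Ω') (𝒯' : Type) (_ : Fintype 𝒯')
      (μ' : Ω' → ℝ) (X' Y' : Ω' → (Fin ℓ → Bool)) (T' : Ω' → 𝒯') (out' : 𝒯' → Bool),
      (∀ ω, 0 ≤ μ' ω) ∧ (∑ ω, μ' ω = 1) ∧
      distOf μ' (fun ω => (X' ω, Y' ω)) = distOf μ (fun ω => (X ω, Y ω)) ∧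
      (∑ ω, if out' (T' ω) ≠ f (X' ω) (Y' ω) then μ' ω else 0) ≤ (1 - ε) * δ ∧
      ∃ ℓ' : ℝ, ℓ' ≤ 2 * ℓ ∧
        cMI μ' X' T' Y' + cMI μ' Y' T' X' ≤ (1 - ε) * I + ε * ℓ' := by
  -- The witnesses must live in `Type`, so the protocol is first moved to `Fin`-indexed copies.
  set e := (Fintype.equivFin Ω).symm
  set j := Fintype.equivFin 𝒯
  set μ₀ := fun i => μ (e i)
  set X₀ := fun i => X (e i)
  set Y₀ := fun i => Y (e i)
  set T₀ := fun i => j (T (e i))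
  have hμ₀ : ∀ i, 0 ≤ μ₀ i := fun i => hμ _
  have hs₀ : ∑ i, μ₀ i = 1 := (e.sum_comp μ).trans hs
  have hI₀ : cMI μ₀ X₀ T₀ Y₀ + cMI μ₀ Y₀ T₀ X₀ = I := by
    rw [cMI_comp_injective_mid j.injective, cMI_comp_injective_mid j.injective, cMI_comp_equiv,
      cMI_comp_equiv, hI]
  refine ⟨_, inferInstance, _, inferInstance, coinMix μ₀ ε, fun z => X₀ z.1, fun z => Y₀ z.1,
    coinSelect T₀ fun i => (X₀ i, Y₀ i), Sum.elim (fun t => out (j.symm t)) fun p => f p.1 p.2,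
    coinMix_nonneg hμ₀ hε.le hε1.le, (sum_coinMix μ₀ ε).trans hs₀, ?_, ?_,
    condEnt μ₀ X₀ Y₀ + condEnt μ₀ Y₀ X₀, ?_, ?_⟩
  · exact (distOf_coinMix_comp_fst μ₀ ε fun i => (X₀ i, Y₀ i)).trans
      (distOf_comp_equiv e μ fun ω => (X ω, Y ω))
  · rw [sum_coinMix_exchange_error]
    gcongr
    simpa only [T₀, Equiv.symm_apply_apply] using (e.sum_comp _).trans_le herr
  · have hX := condEnt_le_logb_card hμ₀ hs₀ X₀ Y₀
    have hY := condEnt_le_logb_card hμ₀ hs₀ Y₀ X₀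
    rw [logb_card_bitvec] at hX hY
    linarith
  · refine le_of_eq ?_
    rw [cMI_coinMix_coinSelect hs₀ ε X₀ T₀ Y₀ _ Prod.fst Prod.snd (fun _ => rfl) fun _ => rfl,
      cMI_coinMix_coinSelect hs₀ ε Y₀ T₀ X₀ _ Prod.snd Prod.fst (fun _ => rfl) fun _ => rfl, ← hI₀]
    ring
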